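/- Let G₁, G₂ be subgroups of a group G with G₁ ∩ G₂ = {e} and G = G₁G₂, and let p₁ : G → G₁, p₂ : G → G₂ be the factorization maps determined by x = p₁(x)p₂(x). Then the map w : G × G → G × G defined by w(x,y) := (x·p₁(p₂(x)⁻¹y), p₂(x)⁻¹y) satisfies the pentagonal relation w₂₃ ∘ w₁₃ ∘ w₁₂ = w₁₂ ∘ w₂₃ on G × G × G, where w₁₂(x,y,z)=(w₁(x,y),w₂(x,y),z), w₁₃(x,y,z)=(w₁(x,z),y,w₂(x,z)), w₂₃(x,y,z)=(x,w₁(y,z),w₂(y,z)) and w(x,y)=(w₁(x,y),w₂(x,y)). -/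
import Mathlib


theorem matched_pair_pentagonal {G : Type*} [Group G] (G₁ G₂ : Subgroup G)
    (htriv : G₁ ⊓ G₂ = ⊥) (p₁ p₂ : G → G)
    (hp₁ : ∀ x, p₁ x ∈ G₁) (hp₂ : ∀ x, p₂ x ∈ G₂) (hfact : ∀ x, x = p₁ x * p₂ x) :
    let w : G × G → G × G := fun p => (p.1 * p₁ ((p₂ p.1)⁻¹ * p.2), (p₂ p.1)⁻¹ * p.2)
    let w₁₂ : G × G × G → G × G × G := fun t => ((w (t.1, t.2.1)).1, (w (t.1, t.2.1)).2, t.2.2)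
    let w₁₃ : G × G × G → G × G × G := fun t => ((w (t.1, t.2.2)).1, t.2.1, (w (t.1, t.2.2)).2)
    let w₂₃ : G × G × G → G × G × G := fun t => (t.1, (w (t.2.1, t.2.2)).1, (w (t.2.1, t.2.2)).2)
    w₂₃ ∘ w₁₃ ∘ w₁₂ = w₁₂ ∘ w₂₃ := by
  have key : ∀ u v : G, u ∈ G₁ → v ∈ G₂ → p₁ (u * v) = u ∧ p₂ (u * v) = v := by
    intro u v hu hv
    have h := hfact (u * v)
    have h1 : p₁ (u * v) = u * v * (p₂ (u * v))⁻¹ := eq_mul_inv_of_mul_eq h.symm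
    have hmem : u⁻¹ * p₁ (u * v) ∈ G₁ ⊓ G₂ := by
      rw [Subgroup.mem_inf]
      constructor
      · exact mul_mem (inv_mem hu) (hp₁ _)
      · have h2 : u⁻¹ * p₁ (u * v) = v * (p₂ (u * v))⁻¹ := by rw [h1]; group
        rw [h2]
        exact mul_mem hv (inv_mem (hp₂ _))
    rw [htriv, Subgroup.mem_bot] at hmem
    have hp1 : p₁ (u * v) = u := by rw [inv_mul_eq_one] at hmem; exact hmem.symm
    refine ⟨hp1, ?_⟩
    have := h
    rw [hp1] at this
    exact (mul_left_cancel this).symm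
  have k1a : ∀ u x : G, u ∈ G₁ → p₁ (u * x) = u * p₁ x := by
    intro u x hu
    have := key (u * p₁ x) (p₂ x) (mul_mem hu (hp₁ x)) (hp₂ x)
    rw [mul_assoc, ← hfact x] at this
    exact this.1
  have k1b : ∀ u x : G, u ∈ G₁ → p₂ (u * x) = p₂ x := by
    intro u x hu
    have := key (u * p₁ x) (p₂ x) (mul_mem hu (hp₁ x)) (hp₂ x)
    rw [mul_assoc, ← hfact x] at this
    exact this.2
  have k2a : ∀ x v : G, v ∈ G₂ → p₁ (x * v) = p₁ x := by
    intro x v hv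
    have := key (p₁ x) (p₂ x * v) (hp₁ x) (mul_mem (hp₂ x) hv)
    rw [← mul_assoc, ← hfact x] at this
    exact this.1
  have k2b : ∀ x v : G, v ∈ G₂ → p₂ (x * v) = p₂ x * v := by
    intro x v hv
    have := key (p₁ x) (p₂ x * v) (hp₁ x) (mul_mem (hp₂ x) hv)
    rw [← mul_assoc, ← hfact x] at this
    exact this.2
  intro w w₁₂ w₁₃ w₂₃
  funext t
  obtain ⟨x, y, z⟩ := t
  simp only [w, w₁₂, w₁₃, w₂₃, Function.comp_apply, Prod.mk.injEq]
  set b := (p₂ x)⁻¹ * y with hb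
  set c := (p₂ y)⁻¹ * z with hc
  have hy : y = p₂ x * b := by rw [hb]; group
  have hd2 : p₂ (x * p₁ b) = p₂ (p₂ x * p₁ b) := by
    conv_lhs => rw [hfact x, mul_assoc]
    exact k1b _ _ (hp₁ x)
  have hy2 : p₂ y = p₂ (p₂ x * p₁ b) * p₂ b := by
    conv_lhs => rw [hy, hfact b, ← mul_assoc]
    exact k2b _ _ (hp₂ b)
  have harg2 : (p₂ b)⁻¹ * ((p₂ (x * p₁ b))⁻¹ * z) = c := by
    rw [hd2, hc, hy2]; group
  have harg : (p₂ (x * p₁ b))⁻¹ * z = p₂ b * c := by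
    rw [hd2, hc, hy2]; group
  have h1 : p₁ (p₂ b * c) = p₁ (p₂ b * p₁ c) := by
    conv_lhs => rw [hfact c, ← mul_assoc]
    exact k2a _ _ (hp₂ c)
  have h2 : p₁ (b * p₁ c) = p₁ b * p₁ (p₂ b * p₁ c) := by
    conv_lhs => rw [hfact b, mul_assoc]
    exact k1a _ _ (hp₁ b)
  have hrhsarg : (p₂ x)⁻¹ * (y * p₁ c) = b * p₁ c := by
    rw [hb]; exact (mul_assoc _ _ _).symm
  refine ⟨?_, ?_, ?_⟩
  · rw [harg, h1, hrhsarg, h2, mul_assoc]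
  · rw [harg2, hrhsarg]
  · exact harg2
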